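/- arXiv:2307.11878 — 3 statements merged into one kernel-verified Lean document; each statement's English description precedes it below -/
import Mathlib

section
/- Suppose B is even. Let p be defined by p_j = p₀_j - δ for j ≤ B/2 and p_j = p₀_j + δ for j > B/2, where 0 < δ ≤ min_j p₀_j. Then p ∈ 𝒫(δ|p₀) and ∑_{j=1}^B (p_j - p₀_j)²/p₀_j = δ² ∑_{j=1}^B 1/p₀_j. Hence sup_{p ∈ 𝒫(δ|p₀)} ∑_j (p_j - p₀_j)²/p₀_j = δ² ∑_j 1/p₀_j when B is even. -/
/-!
Termwise, `|q_j - p₀_j| ≤ δ` gives `(q_j - p₀_j)² / p₀_j ≤ δ² / p₀_j`. The vector that moves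
the first half of the coordinates down by `δ` and the second half up by `δ` attains this in every
coordinate, and because `B` is even the shifts cancel, so it is still a probability vector.
-/

open Finset

/-- The δ-resemblance region around a reference probability vector `p₀`. -/
def resemblanceSet {B : ℕ} (δ : ℝ) (p₀ : Fin B → ℝ) : Set (Fin B → ℝ) :=
  {p | (∀ j, 0 ≤ p j) ∧ (∑ j, p j = 1) ∧ (∀ j, |p j - p₀ j| ≤ δ)}

theorem sum_fin_ite_lt_half_neg_eq_zero {M : Type*} [AddCommGroup M] {n : ℕ} (hn : Even n)
    (c : M) : ∑ j : Fin n, (if (j : ℕ) < n / 2 then -c else c) = 0 := by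
  obtain ⟨m, rfl⟩ := hn
  have hm : (m + m) / 2 = m := by omega
  rw [Fin.sum_univ_eq_sum_range (fun i => if i < (m + m) / 2 then -c else c), hm,
    sum_range_add, sum_congr rfl fun i hi => if_pos (mem_range.mp hi)]
  simp

section ChiSq

variable {ι : Type*} [Fintype ι]

noncomputable def chiSq (p₀ q : ι → ℝ) : ℝ := ∑ j, (q j - p₀ j) ^ 2 / p₀ j

theorem chiSq_le_of_abs_sub_le {p₀ q : ι → ℝ} {δ : ℝ} (hp₀ : ∀ j, 0 ≤ p₀ j)
    (hq : ∀ j, |q j - p₀ j| ≤ δ) : chiSq p₀ q ≤ δ ^ 2 * ∑ j, 1 / p₀ j := by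
  rw [chiSq, mul_sum]
  gcongr with j
  rw [mul_one_div, ← sq_abs]
  gcongr
  · exact hp₀ j
  · exact hq j

theorem chiSq_eq_of_abs_sub_eq {p₀ q : ι → ℝ} {δ : ℝ} (hq : ∀ j, |q j - p₀ j| = δ) :
    chiSq p₀ q = δ ^ 2 * ∑ j, 1 / p₀ j := by
  simp_rw [chiSq, mul_sum, mul_one_div, ← sq_abs (q _ - p₀ _), hq]

end ChiSq

theorem chiSq_sup_even_general {B : ℕ} (hB : Even B) (p₀ : Fin B → ℝ) (δ : ℝ)
    (hp₀1 : ∑ j, p₀ j = 1)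
    (hδ : 0 < δ) (hδmin : ∀ j, δ ≤ p₀ j)
    (p : Fin B → ℝ)
    (hp : ∀ j : Fin B, p j = if (j : ℕ) < B / 2 then p₀ j - δ else p₀ j + δ) :
    p ∈ resemblanceSet δ p₀ ∧
      (∑ j, (p j - p₀ j) ^ 2 / p₀ j) = δ ^ 2 * ∑ j, 1 / p₀ j ∧
      IsGreatest ((fun q : Fin B → ℝ => ∑ j, (q j - p₀ j) ^ 2 / p₀ j) ''
        resemblanceSet δ p₀) (δ ^ 2 * ∑ j, 1 / p₀ j) := by
  change p ∈ _ ∧ chiSq p₀ p = _ ∧ IsGreatest (chiSq p₀ '' _) _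
  have hp_sub : ∀ j, p j - p₀ j = if (j : ℕ) < B / 2 then -δ else δ := fun j => by
    rw [hp j]; split_ifs <;> ring
  have hp_abs : ∀ j, |p j - p₀ j| = δ := fun j => by
    rw [hp_sub j]; split_ifs <;> simp [abs_of_pos hδ]
  have hp_mem : p ∈ resemblanceSet δ p₀ := by
    refine ⟨fun j => ?_, ?_, fun j => (hp_abs j).le⟩
    · rw [hp j]; split_ifs <;> linarith [hδmin j]
    · calc ∑ j, p j = ∑ j, p₀ j + ∑ j, (p j - p₀ j) := by rw [← sum_add_distrib]; simp
        _ = 1 := by rw [hp₀1, sum_congr rfl fun j _ => hp_sub j,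
                      sum_fin_ite_lt_half_neg_eq_zero hB, add_zero]
  have hp_val := chiSq_eq_of_abs_sub_eq hp_abs
  refine ⟨hp_mem, hp_val, ⟨p, hp_mem, hp_val⟩, ?_⟩
  rintro _ ⟨q, ⟨-, -, hq⟩, rfl⟩
  exact chiSq_le_of_abs_sub_le (fun j => hδ.le.trans (hδmin j)) hq

theorem chiSq_sup_even {B : ℕ} (hB : Even B) (p₀ : Fin B → ℝ) (δ : ℝ)
    (hp₀pos : ∀ j, 0 < p₀ j) (hp₀1 : ∑ j, p₀ j = 1)
    (hδ : 0 < δ) (hδmin : ∀ j, δ ≤ p₀ j)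
    (p : Fin B → ℝ)
    (hp : ∀ j : Fin B, p j = if (j : ℕ) < B / 2 then p₀ j - δ else p₀ j + δ) :
    p ∈ resemblanceSet δ p₀ ∧
      (∑ j, (p j - p₀ j) ^ 2 / p₀ j) = δ ^ 2 * ∑ j, 1 / p₀ j ∧
      IsGreatest ((fun q : Fin B → ℝ => ∑ j, (q j - p₀ j) ^ 2 / p₀ j) ''
        resemblanceSet δ p₀) (δ ^ 2 * ∑ j, 1 / p₀ j) :=
  chiSq_sup_even_general hB p₀ δ hp₀1 hδ hδmin p hp
end

section
/- Suppose B is odd. Then sup_{p ∈ 𝒫(δ|p₀)} ∑_{j=1}^B (p_j - p₀_j)²/p₀_j = δ² (∑_{j=1}^B 1/p₀_j − 1/p*), where p* = max_j p₀_j. -/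
open Finset

section

variable {ι : Type*} [Fintype ι]

theorem sum_abs_le_of_sum_eq_zero (hodd : Odd (Fintype.card ι)) {e : ι → ℝ} {δ : ℝ}
    (hsum : ∑ j, e j = 0) (he : ∀ j, |e j| ≤ δ) :
    ∑ j, |e j| ≤ (Fintype.card ι - 1) * δ := by
  classical
  obtain ⟨j⟩ := Fintype.card_pos_iff.mp hodd.pos
  have hδ : 0 ≤ δ := (abs_nonneg _).trans (he j)
  set P := univ.filter (fun j => 0 < e j)
  set N := univ.filter (fun j => ¬ 0 < e j)
  have hcard : #P + #N = Fintype.card ι := by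
    rw [card_filter_add_card_filter_not, card_univ]
  have hPN : ∑ j ∈ P, e j = ∑ j ∈ N, -e j := by
    rw [sum_neg_distrib, eq_neg_iff_add_eq_zero, sum_filter_add_sum_filter_not, hsum]
  have habs : ∑ j, |e j| = 2 * ∑ j ∈ P, e j := by
    rw [← sum_filter_add_sum_filter_not univ (fun j => 0 < e j),
      sum_congr rfl fun j hj => abs_of_pos (mem_filter.mp hj).2,
      sum_congr rfl fun j hj => abs_of_nonpos (not_lt.mp (mem_filter.mp hj).2), ← hPN]
    ring
  have hP : ∑ j ∈ P, e j ≤ #P * δ := by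
    simpa using sum_le_card_nsmul P e δ fun j _ => (abs_le.mp (he j)).2
  have hN : ∑ j ∈ P, e j ≤ #N * δ := by
    simpa [hPN] using
      sum_le_card_nsmul N (fun j => -e j) δ fun j _ => neg_le.mp (abs_le.mp (he j)).1
  obtain ⟨k, hk⟩ := hodd
  have hk' : (Fintype.card ι : ℝ) - 1 = 2 * k := by rw [hk]; push_cast; ring
  rw [habs, hk']
  rcases le_or_gt #P k with h | h
  · have : (#P : ℝ) ≤ k := by exact_mod_cast h
    nlinarith
  · have : (#N : ℝ) ≤ k := by exact_mod_cast (show #N ≤ k by omega)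
    nlinarith

theorem sum_sq_le_of_sum_eq_zero (hodd : Odd (Fintype.card ι)) {e : ι → ℝ} {δ : ℝ}
    (hsum : ∑ j, e j = 0) (he : ∀ j, |e j| ≤ δ) :
    ∑ j, e j ^ 2 ≤ (Fintype.card ι - 1) * δ ^ 2 := by
  obtain ⟨j⟩ := Fintype.card_pos_iff.mp hodd.pos
  have hδ : 0 ≤ δ := (abs_nonneg _).trans (he j)
  calc ∑ j, e j ^ 2 ≤ ∑ j, δ * |e j| :=
        sum_le_sum fun j _ => by
          rw [← sq_abs, sq]; exact mul_le_mul_of_nonneg_right (he j) (abs_nonneg _)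
    _ = δ * ∑ j, |e j| := (mul_sum _ _ _).symm
    _ ≤ δ * ((Fintype.card ι - 1) * δ) :=
        mul_le_mul_of_nonneg_left (sum_abs_le_of_sum_eq_zero hodd hsum he) hδ
    _ = (Fintype.card ι - 1) * δ ^ 2 := by ring

theorem sum_sq_div_le_of_sum_eq_zero (hodd : Odd (Fintype.card ι)) {e w : ι → ℝ} {δ m : ℝ}
    (hsum : ∑ j, e j = 0) (he : ∀ j, |e j| ≤ δ) (hw : ∀ j, 0 < w j)
    (hm : ∀ j, w j ≤ m) :
    ∑ j, e j ^ 2 / w j ≤ δ ^ 2 * (∑ j, 1 / w j - 1 / m) := by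
  obtain ⟨j⟩ := Fintype.card_pos_iff.mp hodd.pos
  have hm0 : 0 < m := (hw j).trans_le (hm j)
  have hterm : ∀ j, e j ^ 2 / w j ≤ δ ^ 2 / w j - (δ ^ 2 - e j ^ 2) / m := fun j => by
    have hsq : e j ^ 2 ≤ δ ^ 2 := sq_le_sq' (abs_le.mp (he j)).1 (abs_le.mp (he j)).2
    have := div_le_div_of_nonneg_left (sub_nonneg.mpr hsq) (hw j) (hm j)
    rw [sub_div, sub_div] at this; rw [sub_div]
    linarith
  have hsq := sum_sq_le_of_sum_eq_zero hodd hsum he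
  calc ∑ j, e j ^ 2 / w j ≤ ∑ j, (δ ^ 2 / w j - (δ ^ 2 - e j ^ 2) / m) :=
        sum_le_sum fun j _ => hterm j
    _ = δ ^ 2 * ∑ j, 1 / w j - (Fintype.card ι * δ ^ 2 - ∑ j, e j ^ 2) / m := by
        rw [sum_sub_distrib, ← sum_div, sum_sub_distrib, sum_const, card_univ, nsmul_eq_mul,
          mul_sum]
        simp only [mul_one_div]
    _ ≤ δ ^ 2 * (∑ j, 1 / w j - 1 / m) := by
        rw [mul_sub, mul_one_div]
        gcongr
        linarith

theorem exists_balanced_signs (hodd : Odd (Fintype.card ι)) (j₀ : ι) :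
    ∃ ε : ι → ℝ, ε j₀ = 0 ∧ (∀ j ≠ j₀, |ε j| = 1) ∧ ∑ j, ε j = 0 := by
  classical
  obtain ⟨k, hk⟩ := hodd
  have ht : #(univ.erase j₀) = 2 * k := by rw [card_erase_of_mem (mem_univ _), card_univ]; omega
  obtain ⟨S, hSt, hS⟩ := exists_subset_card_eq (show k ≤ #(univ.erase j₀) by omega)
  refine ⟨fun j => (if j ∈ S then 1 else 0) - (if j ∈ univ.erase j₀ \ S then 1 else 0),
    ?_, ?_, ?_⟩
  · have : j₀ ∉ S := fun h => by simpa using hSt h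
    simp [this]
  · intro j hj
    by_cases h : j ∈ S <;> simp [h, hj]
  · rw [sum_sub_distrib, sum_ite_mem, sum_ite_mem, univ_inter, univ_inter]
    simp only [sum_const, nsmul_eq_mul, mul_one, card_sdiff_of_subset hSt, ht, hS]
    rw [show 2 * k - k = k by omega, sub_self]

theorem sum_sq_div_eq_of_abs_eq_one {ε : ι → ℝ} {j₀ : ι} (h₀ : ε j₀ = 0)
    (hε : ∀ j ≠ j₀, |ε j| = 1) (w : ι → ℝ) (δ : ℝ) :
    ∑ j, (δ * ε j) ^ 2 / w j = δ ^ 2 * (∑ j, 1 / w j - 1 / w j₀) := by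
  classical
  rw [← add_sum_erase _ _ (mem_univ j₀), ← sum_erase_eq_sub (mem_univ j₀), h₀, mul_sum,
    mul_zero, zero_pow two_ne_zero, zero_div, zero_add]
  refine sum_congr rfl fun j hj => ?_
  rw [mul_pow, ← sq_abs (ε j), hε j (ne_of_mem_erase hj)]
  ring

end

theorem chiSq_sup_odd {B : ℕ} (hB : Odd B) (hB3 : 3 ≤ B)
    (p₀ : Fin B → ℝ) (δ : ℝ)
    (hp₀1 : ∑ j, p₀ j = 1)
    (hδ : 0 < δ) (hδmin : ∀ j, δ ≤ p₀ j) :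
    sSup ((fun p : Fin B → ℝ => ∑ j, (p j - p₀ j) ^ 2 / p₀ j) ''
        resemblanceSet δ p₀) =
      δ ^ 2 * ((∑ j, 1 / p₀ j) -
        1 / (Finset.univ.sup' ⟨⟨0, by omega⟩, Finset.mem_univ _⟩ p₀)) := by
  rw [← Fintype.card_fin B] at hB
  have hp₀pos : ∀ j, 0 < p₀ j := fun j => hδ.trans_le (hδmin j)
  have hmax : ∀ j, p₀ j ≤ univ.sup' ⟨⟨0, by omega⟩, mem_univ _⟩ p₀ := fun j =>
    le_sup' p₀ (mem_univ j)
  obtain ⟨j₀, -, hj₀⟩ := exists_mem_eq_sup' ⟨⟨0, by omega⟩, mem_univ _⟩ p₀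
  refine IsGreatest.csSup_eq ⟨?_, ?_⟩
  · obtain ⟨ε, hε₀, hε, hεsum⟩ := exists_balanced_signs hB j₀
    have hε_le : ∀ j, |ε j| ≤ 1 := fun j => by by_cases h : j = j₀ <;> simp [h, hε₀, hε]
    refine ⟨fun j => p₀ j + δ * ε j, ⟨fun j => ?_, ?_, fun j => ?_⟩, ?_⟩
    · nlinarith [neg_abs_le (ε j), hε_le j, hδmin j]
    · rw [sum_add_distrib, ← mul_sum, hεsum, hp₀1, mul_zero, add_zero]
    · rw [add_sub_cancel_left, abs_mul, abs_of_pos hδ]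
      exact mul_le_of_le_one_right hδ.le (hε_le j)
    · simp only [add_sub_cancel_left, hj₀]
      exact sum_sq_div_eq_of_abs_eq_one hε₀ hε p₀ δ
  · rintro _ ⟨p, ⟨-, hp1, hpδ⟩, rfl⟩
    refine sum_sq_div_le_of_sum_eq_zero hB ?_ hpδ hp₀pos hmax
    rw [sum_sub_distrib, hp1, hp₀1, sub_self]
end

section
/- For vectors d ∈ ℝ^B with ∑_j d_j = 0 and |d_j| ≤ δ for all j, the maximum of ∑_j d_j²/p₀_j over such d, when B is even, equals δ² ∑_j 1/p₀_j. -/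
/-! Each term obeys `d j ^ 2 ≤ δ ^ 2`, and the bound is attained termwise by the alternating
vector `(±δ)`, whose entries sum to zero because `B` is even. -/

open Finset

theorem Fin.sum_neg_one_pow_of_even {R : Type*} [Ring R] {n : ℕ} (hn : Even n) :
    ∑ j : Fin n, (-1 : R) ^ (j : ℕ) = 0 := by
  rw [Fin.sum_univ_eq_sum_range (fun i => (-1 : R) ^ i), neg_one_geom_sum, if_pos hn]

section WeightedSquares

variable {ι : Type*} [Fintype ι] {p d : ι → ℝ} {δ : ℝ}

theorem sum_sq_div_le_of_abs_le (hp : ∀ j, 0 ≤ p j) (hd : ∀ j, |d j| ≤ δ) :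
    ∑ j, d j ^ 2 / p j ≤ δ ^ 2 * ∑ j, 1 / p j := by
  rw [mul_sum]
  refine sum_le_sum fun j _ => ?_
  rw [mul_one_div]
  exact div_le_div_of_nonneg_right (sq_le_sq' (abs_le.mp (hd j)).1 (abs_le.mp (hd j)).2) (hp j)

theorem sum_sq_div_of_abs_eq (hd : ∀ j, |d j| = δ) :
    ∑ j, d j ^ 2 / p j = δ ^ 2 * ∑ j, 1 / p j := by
  rw [mul_sum]
  refine sum_congr rfl fun j _ => ?_
  rw [mul_one_div, ← sq_abs, hd]

end WeightedSquares

theorem even_max_weighted_sq_deviation_general {B : ℕ} (hB : Even B)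
    (δ : ℝ) (hδ : 0 < δ) (p₀ : Fin B → ℝ) (hp₀pos : ∀ j, 0 < p₀ j) :
    IsGreatest ((fun d : Fin B → ℝ => ∑ j, (d j) ^ 2 / p₀ j) ''
        {d | (∑ j, d j = 0) ∧ ∀ j, |d j| ≤ δ})
      (δ ^ 2 * ∑ j, 1 / p₀ j) := by
  have h_alt_abs : ∀ j : Fin B, |(-1 : ℝ) ^ (j : ℕ) * δ| = δ := fun j => by
    rw [abs_mul, abs_pow, abs_neg, abs_one, one_pow, one_mul, abs_of_pos hδ]
  refine ⟨⟨fun j => (-1 : ℝ) ^ (j : ℕ) * δ, ⟨?_, fun j => (h_alt_abs j).le⟩, ?_⟩, ?_⟩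
  · rw [← sum_mul, Fin.sum_neg_one_pow_of_even hB, zero_mul]
  · exact sum_sq_div_of_abs_eq h_alt_abs
  · rintro _ ⟨d, ⟨-, hd⟩, rfl⟩
    exact sum_sq_div_le_of_abs_le (fun j => (hp₀pos j).le) hd

theorem even_max_weighted_sq_deviation {B : ℕ} (hB : Even B) (hBpos : 0 < B)
    (δ : ℝ) (hδ : 0 < δ) (p₀ : Fin B → ℝ) (hp₀pos : ∀ j, 0 < p₀ j) :
    IsGreatest ((fun d : Fin B → ℝ => ∑ j, (d j) ^ 2 / p₀ j) ''
        {d | (∑ j, d j = 0) ∧ ∀ j, |d j| ≤ δ})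
      (δ ^ 2 * ∑ j, 1 / p₀ j) :=
  even_max_weighted_sq_deviation_general hB δ hδ p₀ hp₀pos
end
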